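/- In a congestion game, any state s that is a local minimum of Rosenthal's potential function Φ with respect to unilateral deviations (i.e. Φ(s) ≤ Φ(s') for every state s' obtained from s by a single player changing his strategy) is a pure Nash equilibrium. -/

import Mathlib

open Finset

/-- In a congestion game, the number of players using resource `r` in state `s`. -/
def usage {n : ℕ} {R : Type*} [Fintype R] [DecidableEq R]
    (s : Fin n → Finset R) (r : R) : ℕ :=
  (Finset.univ.filter (fun j : Fin n => r ∈ s j)).card

/-- The cost of player `i` in state `s`: `c_i(s) = ∑_{r ∈ s_i} d_r(f_s(r))`. -/
def cost {n : ℕ} {R : Type*} [Fintype R] [DecidableEq R]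
    (d : R → ℕ → ℕ) (i : Fin n) (s : Fin n → Finset R) : ℕ :=
  ∑ r ∈ s i, d r (usage s r)

/-- Rosenthal's potential function: `Φ(s) = ∑_{r ∈ R} ∑_{k=1}^{f_s(r)} d_r(k)`. -/
def potential {n : ℕ} {R : Type*} [Fintype R] [DecidableEq R]
    (d : R → ℕ → ℕ) (s : Fin n → Finset R) : ℕ :=
  ∑ r : R, ∑ k ∈ Finset.Icc 1 (usage s r), d r k

/-! Rosenthal's potential is exact: when player `i` switches from `s i` to `t`, each resource's
load changes by at most one, so its term in `Φ` changes by exactly the delay that `i` gains or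
loses on it. Summing over resources, `Φ` changes by exactly the change of `c_i`, so a local
minimum of `Φ` leaves no player a profitable deviation. -/

lemma usage_update_add_ite {n : ℕ} {R : Type*} [Fintype R] [DecidableEq R]
    (s : Fin n → Finset R) (i : Fin n) (t : Finset R) (r : R) :
    usage (Function.update s i t) r + (if r ∈ s i then 1 else 0)
      = usage s r + (if r ∈ t then 1 else 0) := by
  have hsplit : ∀ u : Fin n → Finset R, usage u r
      = (if r ∈ u i then 1 else 0) + ∑ j ∈ univ.erase i, if r ∈ u j then 1 else 0 := by
    intro u
    rw [usage, card_filter, ← add_sum_erase _ _ (mem_univ i)]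
  have herase : ∑ j ∈ univ.erase i, (if r ∈ Function.update s i t j then 1 else 0)
      = ∑ j ∈ univ.erase i, if r ∈ s j then 1 else 0 :=
    sum_congr rfl fun j hj => by rw [Function.update_of_ne (ne_of_mem_erase hj)]
  rw [hsplit, hsplit s, Function.update_self, herase]
  ring

lemma sum_Icc_add_ite_eq {M : Type*} [AddCommMonoid M] (g : ℕ → M) {a b : ℕ} {p q : Prop}
    [Decidable p] [Decidable q] (h : a + (if p then 1 else 0) = b + (if q then 1 else 0)) :
    ∑ k ∈ Icc 1 a, g k + (if p then g b else 0) = ∑ k ∈ Icc 1 b, g k + (if q then g a else 0) := by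
  by_cases hp : p <;> by_cases hq : q <;> simp only [hp, hq, if_true, if_false, add_zero] at h ⊢
  · rw [show a = b by omega]
  · rw [show b = a + 1 by omega, sum_Icc_succ_top (Nat.le_add_left 1 a)]
  · rw [show a = b + 1 by omega, sum_Icc_succ_top (Nat.le_add_left 1 b)]
  · rw [show a = b by omega]

lemma cost_eq_sum_ite {n : ℕ} {R : Type*} [Fintype R] [DecidableEq R]
    (d : R → ℕ → ℕ) (i : Fin n) (s : Fin n → Finset R) :
    cost d i s = ∑ r : R, if r ∈ s i then d r (usage s r) else 0 := by
  rw [cost, sum_ite_mem, univ_inter]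

lemma potential_update_add_cost {n : ℕ} {R : Type*} [Fintype R] [DecidableEq R]
    (d : R → ℕ → ℕ) (s : Fin n → Finset R) (i : Fin n) (t : Finset R) :
    potential d (Function.update s i t) + cost d i s
      = potential d s + cost d i (Function.update s i t) := by
  rw [cost_eq_sum_ite, cost_eq_sum_ite, Function.update_self, potential, potential,
    ← sum_add_distrib, ← sum_add_distrib]
  exact sum_congr rfl fun r _ => sum_Icc_add_ite_eq (d r) (usage_update_add_ite s i t r)

theorem potential_local_min_is_nash_general {n : ℕ} {R : Type*} [Fintype R] [DecidableEq R]
    (Strat : Fin n → Finset (Finset R)) (d : R → ℕ → ℕ)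
    (s : Fin n → Finset R)
    (hmin : ∀ i : Fin n, ∀ t ∈ Strat i,
      potential d s ≤ potential d (Function.update s i t)) :
    ∀ i : Fin n, ∀ t ∈ Strat i, cost d i s ≤ cost d i (Function.update s i t) := by
  intro i t ht
  have hexact := potential_update_add_cost d s i t
  have hle := hmin i t ht
  omega

/-- In a congestion game, any state `s` that is a local minimum of Rosenthal's
potential function with respect to unilateral deviations is a pure Nash
equilibrium. -/
theorem potential_local_min_is_nash {n : ℕ} {R : Type*} [Fintype R] [DecidableEq R]
    (Strat : Fin n → Finset (Finset R)) (d : R → ℕ → ℕ) (hd : ∀ r, Monotone (d r))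
    (s : Fin n → Finset R) (hs : ∀ i, s i ∈ Strat i)
    (hmin : ∀ i : Fin n, ∀ t ∈ Strat i,
      potential d s ≤ potential d (Function.update s i t)) :
    ∀ i : Fin n, ∀ t ∈ Strat i, cost d i s ≤ cost d i (Function.update s i t) :=
  potential_local_min_is_nash_general Strat d s hmin
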